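/- arXiv:1708.05497 — 2 statements merged into one kernel-verified Lean document; each statement's English description precedes it below -/
import Mathlib

section
/- (Dyadic chain of segments in a Reifenberg flat domain.) Let Ω ⊂ ℝ^d (d ≥ 2) be a domain satisfying Assumption A with γ ∈ [0,1/48] and radius R0 > 0. Let x0 ∈ ∂Ω and R ∈ (0,R0]. Then there exists a sequence (x^k)_{k=0}^∞ such that x^k ∈ ∂B_{R/2^{k+1}}(x0) ∩ Ω, the line segment from x^k to x^{k+1} is contained in closure(B_{R/2^{k+1}}(x0) \ B_{R/2^{k+2}}(x0)) ∩ Ω, has length at most R/2^k, and every point z on this segment satisfies dist(z, ∂Ω) > 4γ R/2^k. Moreover, for any x ∈ Ω with dist(x, ∂Ω) = |x − x0| ≤ R/4, there exists k0 ∈ {0,1,2,…} such that x ∈ closure(B_{R/2^{k0+2}}(x0)) ∩ Ω, the line segment from x to x^{k0} is contained in closure(B_{R/2^{k0+1}}(x0)) ∩ Ω, has length at most R/2^{k0}, and every point z on it satisfies dist(z, ∂Ω) > 4γ R/2^{k0}. -/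
set_option maxHeartbeats 1000000


open MeasureTheory Metric Set
open scoped ENNReal RealInnerProductSpace

noncomputable section

abbrev Ed (d : ℕ) := EuclideanSpace ℝ (Fin d)

/-- Assumption A: Reifenberg flatness with parameter `γ` and radius `R0`.  A coordinate
system is encoded by the unit vector `ν` giving the direction of its first coordinate
axis. -/
def ReifenbergFlat {d : ℕ} (Ω : Set (Ed d)) (γ R0 : ℝ) : Prop :=
  ∀ x0 ∈ frontier Ω, ∀ R : ℝ, 0 < R → R ≤ R0 →
    ∃ ν : Ed d, ‖ν‖ = 1 ∧
      ({y | ⟪ν, x0⟫ + γ * R < ⟪ν, y⟫} ∩ ball x0 R ⊆ Ω ∩ ball x0 R) ∧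
      (Ω ∩ ball x0 R ⊆ {y | ⟪ν, x0⟫ - γ * R < ⟪ν, y⟫} ∩ ball x0 R)


variable {E : Type*} [NormedAddCommGroup E] [InnerProductSpace ℝ E]

lemma mem_closure_annulus {x0 z : E} {r r' : ℝ} (h0 : 0 < r') (hrr : r' < r)
    (h1 : r' ≤ dist z x0) (h2 : dist z x0 ≤ r) :
    z ∈ closure (ball x0 r \ ball x0 r') := by
  have hr : 0 < r := h0.trans hrr
  rcases lt_or_eq_of_le h2 with h2' | h2'
  · exact subset_closure ⟨mem_ball.2 h2', fun h => absurd (mem_ball.1 h) (not_lt.2 h1)⟩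
  · rw [Metric.mem_closure_iff]
    intro ε hε
    set θ : ℝ := max (r'/r) (1 - ε/(2*r)) with hθdef
    have hθ1 : θ < 1 := by
      apply max_lt ((div_lt_one hr).2 hrr)
      have : 0 < ε/(2*r) := by positivity
      linarith
    have hθ0 : 0 < θ := lt_max_of_lt_left (by positivity)
    refine ⟨x0 + θ • (z - x0), ⟨?_, ?_⟩, ?_⟩
    · rw [mem_ball, dist_eq_norm]
      have : x0 + θ • (z - x0) - x0 = θ • (z - x0) := by abel
      rw [this, norm_smul, Real.norm_eq_abs, abs_of_pos hθ0, ← dist_eq_norm, h2']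
      calc θ * r < 1 * r := by nlinarith
        _ = r := one_mul r
    · rw [mem_ball, not_lt, dist_eq_norm]
      have : x0 + θ • (z - x0) - x0 = θ • (z - x0) := by abel
      rw [this, norm_smul, Real.norm_eq_abs, abs_of_pos hθ0, ← dist_eq_norm, h2']
      calc r' = (r'/r) * r := by field_simp
        _ ≤ θ * r := by
            have := le_max_left (r'/r) (1 - ε/(2*r))
            nlinarith
    · rw [dist_comm, dist_eq_norm]
      have h3 : x0 + θ • (z - x0) - z = (θ - 1) • (z - x0) := by
        rw [sub_smul, one_smul]; abel
      rw [h3, norm_smul, Real.norm_eq_abs, abs_of_neg (by linarith), ← dist_eq_norm, h2']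
      have hle : 1 - θ ≤ ε/(2*r) := by
        have := le_max_right (r'/r) (1 - ε/(2*r)); linarith
      calc -(θ-1) * r = (1-θ)*r := by ring
        _ ≤ ε/(2*r)*r := by nlinarith
        _ = ε/2 := by field_simp
        _ < ε := by linarith

lemma cross_frontier {α : Type*} [TopologicalSpace α] {s Ω : Set α}
    (hs : IsPreconnected s) {a b : α} (ha : a ∈ s) (haΩ : a ∈ Ω) (hb : b ∈ s) (hbΩ : b ∉ Ω) :
    ∃ p ∈ s, p ∈ frontier Ω := by
  by_contra h
  push_neg at h
  have hsub : s ⊆ interior Ω ∪ (closure Ω)ᶜ := by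
    intro p hp
    rcases em (p ∈ closure Ω) with hc | hc
    · left
      rcases em (p ∈ interior Ω) with hi | hi
      · exact hi
      · exact absurd ⟨hc, hi⟩ (h p hp)
    · exact Or.inr hc
  have hdis : Disjoint (interior Ω) (closure Ω)ᶜ :=
    disjoint_compl_right.mono interior_subset_closure le_rfl
  rcases hs.subset_or_subset isOpen_interior (isClosed_closure.isOpen_compl) hdis hsub with h1 | h1
  · exact hbΩ (interior_subset (h1 hb))
  · exact (h1 ha) (subset_closure haΩ)


lemma ball_subset_domain {Ω : Set E} {ν x0 z : E} {γ ρ δ : ℝ} (hν : ‖ν‖ = 1)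
    (hlow : {y | ⟪ν, x0⟫ + γ * ρ < ⟪ν, y⟫} ∩ ball x0 ρ ⊆ Ω ∩ ball x0 ρ)
    (h1 : γ * ρ + δ ≤ ⟪ν, z - x0⟫) (h2 : ‖z - x0‖ + δ ≤ ρ) (hδ : 0 < δ) :
    ball z δ ⊆ Ω := by
  intro w hw
  have hwz : ‖w - z‖ < δ := by rw [← dist_eq_norm]; exact mem_ball.1 hw
  have hin : ⟪ν, w - z⟫ ≥ -‖w - z‖ := by
    have := abs_real_inner_le_norm ν (w - z)
    rw [hν, one_mul] at this
    have := abs_le.1 this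
    linarith [this.1]
  have key : ⟪ν, x0⟫ + γ * ρ < ⟪ν, w⟫ := by
    have e1 : ⟪ν, w⟫ = ⟪ν, x0⟫ + ⟪ν, z - x0⟫ + ⟪ν, w - z⟫ := by
      simp [inner_sub_right]
    rw [e1]; linarith
  have hball : w ∈ ball x0 ρ := by
    rw [mem_ball, dist_eq_norm]
    have heq : w - x0 = (w - z) + (z - x0) := by abel
    calc ‖w - x0‖ ≤ ‖w - z‖ + ‖z - x0‖ := by rw [heq]; exact norm_add_le _ _
      _ < ρ := by linarith
  exact (hlow ⟨key, hball⟩).1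

omit [InnerProductSpace ℝ E] in
lemma le_infDist_frontier {Ω : Set E} (hΩo : IsOpen Ω) {z : E} {δ : ℝ}
    (hne : (frontier Ω).Nonempty) (hball : ball z δ ⊆ Ω) :
    δ ≤ infDist z (frontier Ω) := by
  by_contra h
  push_neg at h
  obtain ⟨p, hp, hpd⟩ := (Metric.infDist_lt_iff hne).1 h
  have : p ∈ Ω := hball (by rwa [mem_ball, dist_comm])
  rw [hΩo.frontier_eq] at hp
  exact hp.2 this

lemma seg_in_domain {Ω : Set E} {ν x0 p q : E} {γ ρ δ : ℝ} (hν : ‖ν‖ = 1)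
    (hlow : {y | ⟪ν, x0⟫ + γ * ρ < ⟪ν, y⟫} ∩ ball x0 ρ ⊆ Ω ∩ ball x0 ρ)
    (hΩo : IsOpen Ω) (hne : (frontier Ω).Nonempty) (hδ : 0 < δ)
    (hp1 : γ * ρ + δ ≤ ⟪ν, p - x0⟫) (hq1 : γ * ρ + δ ≤ ⟪ν, q - x0⟫)
    (hp2 : ‖p - x0‖ + δ ≤ ρ) (hq2 : ‖q - x0‖ + δ ≤ ρ) :
    ∀ z ∈ segment ℝ p q, z ∈ Ω ∧ δ ≤ infDist z (frontier Ω) ∧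
      ‖z - x0‖ ≤ max ‖p - x0‖ ‖q - x0‖ := by
  rintro z ⟨a, b, ha, hb, hab, rfl⟩
  obtain rfl : b = 1 - a := by linarith
  have hsplit : a • p + (1 - a) • q - x0 = a • (p - x0) + (1 - a) • (q - x0) := by
    simp only [smul_sub, sub_smul, one_smul]; abel
  have hnorm : ‖a • p + (1 - a) • q - x0‖ ≤ max ‖p - x0‖ ‖q - x0‖ := by
    rw [hsplit]
    calc ‖a • (p - x0) + (1 - a) • (q - x0)‖
        ≤ ‖a • (p - x0)‖ + ‖(1 - a) • (q - x0)‖ := norm_add_le _ _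
      _ = a * ‖p - x0‖ + (1 - a) * ‖q - x0‖ := by
          rw [norm_smul, norm_smul, Real.norm_eq_abs, Real.norm_eq_abs,
            abs_of_nonneg ha, abs_of_nonneg hb]
      _ ≤ a * max ‖p - x0‖ ‖q - x0‖ + (1 - a) * max ‖p - x0‖ ‖q - x0‖ := by
          gcongr
          exacts [le_max_left _ _, le_max_right _ _]
      _ = max ‖p - x0‖ ‖q - x0‖ := by ring
  have hinner : γ * ρ + δ ≤ ⟪ν, a • p + (1 - a) • q - x0⟫ := by
    rw [hsplit, inner_add_right, real_inner_smul_right, real_inner_smul_right]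
    nlinarith
  have hmax : max ‖p - x0‖ ‖q - x0‖ + δ ≤ ρ := by
    rcases max_cases ‖p - x0‖ ‖q - x0‖ with ⟨h, _⟩ | ⟨h, _⟩ <;> rw [h] <;> linarith
  have hball : ball (a • p + (1 - a) • q) δ ⊆ Ω :=
    ball_subset_domain hν hlow hinner (by linarith) hδ
  exact ⟨hball (mem_ball_self hδ), le_infDist_frontier hΩo hne hball, hnorm⟩

lemma nu_close {Ω : Set E} {ν ν' x0 : E} {γ ρ : ℝ} (hγ0 : 0 ≤ γ) (hγ : γ ≤ 1/48) (hρ : 0 < ρ)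
    (hν : ‖ν‖ = 1) (hν' : ‖ν'‖ = 1)
    (hlow : {y | ⟪ν, x0⟫ + γ * ρ < ⟪ν, y⟫} ∩ ball x0 ρ ⊆ Ω ∩ ball x0 ρ)
    (hup' : Ω ∩ ball x0 (ρ/2) ⊆ {y | ⟪ν', x0⟫ - γ * (ρ/2) < ⟪ν', y⟫} ∩ ball x0 (ρ/2)) :
    9/10 ≤ ⟪ν, ν'⟫ := by
  have hνν : ⟪ν, ν⟫ = 1 := by
    rw [real_inner_self_eq_norm_mul_norm, hν]; norm_num
  have hν'ν' : ⟪ν', ν'⟫ = 1 := by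
    rw [real_inner_self_eq_norm_mul_norm, hν']; norm_num
  set c : ℝ := ⟪ν, ν'⟫ with hc
  have hc' : ⟪ν', ν⟫ = c := by rw [real_inner_comm]
  have test : ∀ v : E, γ * ρ < ⟪ν, v⟫ → ‖v‖ < ρ/2 → -(γ * (ρ/2)) < ⟪ν', v⟫ := by
    intro v hv1 hv2
    have hz : x0 + v ∈ Ω ∩ ball x0 (ρ/2) := by
      constructor
      · refine (hlow ⟨?_, ?_⟩).1
        · simpa [inner_add_right] using hv1
        · rw [mem_ball, dist_eq_norm]; simpa using hv2.trans (by linarith)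
      · rw [mem_ball, dist_eq_norm]; simpa using hv2
    have := (hup' hz).1
    simp only [mem_setOf_eq, inner_add_right] at this
    linarith
  have hstep1 : -(2*γ) < c := by
    have h := test ((ρ/4) • ν) (by rw [real_inner_smul_right, hνν]; nlinarith)
      (by rw [norm_smul, Real.norm_eq_abs, abs_of_pos (by positivity), hν]; nlinarith)
    rw [real_inner_smul_right, hc'] at h
    nlinarith
  have hcle : c ≤ 1 := by
    have := real_inner_le_norm ν ν'
    rw [hν, hν'] at this; linarith
  set w : E := ν' - c • ν with hw
  have hνw : ⟪ν, w⟫ = 0 := by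
    rw [hw, inner_sub_right, real_inner_smul_right, hνν, ← hc]; ring
  have hwν : ⟪w, ν⟫ = 0 := by rw [real_inner_comm]; exact hνw
  have hν'w : ⟪ν', w⟫ = 1 - c^2 := by
    rw [hw, inner_sub_right, real_inner_smul_right, hν'ν', hc']; ring
  have hw2 : ‖w‖^2 = 1 - c^2 := by
    rw [← real_inner_self_eq_norm_sq, hw]
    simp only [inner_sub_left, inner_sub_right, real_inner_smul_left, real_inner_smul_right,
      hνν, hν'ν', hc', real_inner_comm ν ν']
    rw [← hc]; ring
  rcases eq_or_lt_of_le (norm_nonneg w) with hw0 | hw0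
  · have h1 : 1 - c^2 = 0 := by rw [← hw2, ← hw0]; norm_num
    by_contra hlt
    push_neg at hlt
    nlinarith [mul_pos (show (0:ℝ) < c + 1 by nlinarith) (show (0:ℝ) < 1 - c by nlinarith)]
  · set s : ℝ := ‖w‖ with hs
    have hs2 : s^2 = 1 - c^2 := hw2
    have key := test ((ρ/8) • ν + (-(3*ρ/(8*s))) • w) ?_ ?_
    · rw [inner_add_right, real_inner_smul_right, real_inner_smul_right, hc', hν'w,
        ← hs2] at key
      have hsimp : (-(3*ρ/(8*s))) * s^2 = -((3*ρ/8) * s) := by field_simp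
      have hkey2 : -(γ*(ρ/2)) < ρ/8 * c - (3*ρ/8) * s := by nlinarith [hsimp]
      have hsb : 3 * s < c + 4*γ := by
        by_contra h
        push_neg at h
        have hle : ρ/8 * c - 3*ρ/8 * s ≤ -(γ*(ρ/2)) := by
          nlinarith [mul_nonneg (show (0:ℝ) ≤ ρ/8 by positivity)
            (show (0:ℝ) ≤ 3*s - c - 4*γ by linarith)]
        linarith
      have hslt : s < 13/36 := by linarith
      have hsq : s^2 < 169/1296 := by nlinarith [hw0.le]
      have hc2 : c^2 > 1127/1296 := by
        have := hs2
        linarith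
      by_contra hlt
      push_neg at hlt
      nlinarith [mul_nonneg (show (0:ℝ) ≤ c + 1/24 by linarith)
        (show (0:ℝ) ≤ 9/10 - c by linarith)]
    · rw [inner_add_right, real_inner_smul_right, real_inner_smul_right, hνν, hνw]
      nlinarith
    · have hnn : ‖(ρ/8) • ν + (-(3*ρ/(8*s))) • w‖^2 = (ρ/8)^2 + (3*ρ/8)^2 := by
        rw [← real_inner_self_eq_norm_sq]
        simp only [inner_add_left, inner_add_right, real_inner_smul_left,
          real_inner_smul_right, hνν, hwν, hνw]
        have hs0 : s ≠ 0 := ne_of_gt hw0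
        rw [real_inner_self_eq_norm_sq, ← hs]
        field_simp
        ring
      have hlt2 : ‖(ρ/8) • ν + (-(3*ρ/(8*s))) • w‖^2 < (ρ/2)^2 := by rw [hnn]; nlinarith
      exact lt_of_pow_lt_pow_left₀ 2 (by positivity) hlt2

lemma inner_lower_of_infDist {Ω : Set E} (hΩo : IsOpen Ω) {ν x0 y : E} {γ ρ : ℝ}
    (hγ0 : 0 ≤ γ) (hρ : 0 < ρ) (hν : ‖ν‖ = 1)
    (hup : Ω ∩ ball x0 ρ ⊆ {z | ⟪ν, x0⟫ - γ * ρ < ⟪ν, z⟫} ∩ ball x0 ρ)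
    (hy : y ∈ Ω) (hinf : infDist y (frontier Ω) = dist y x0)
    (hd : dist y x0 ≤ ρ/4) :
    dist y x0 - γ * ρ ≤ ⟪ν, y - x0⟫ := by
  set ρy : ℝ := dist y x0 with hρy
  have hρy0 : 0 ≤ ρy := dist_nonneg
  have hyball : y ∈ ball x0 ρ := by rw [mem_ball]; linarith
  have hι : -(γ * ρ) < ⟪ν, y - x0⟫ := by
    have := (hup ⟨hy, hyball⟩).1
    simp only [mem_setOf_eq] at this
    rw [inner_sub_right]; linarith
  set ι : ℝ := ⟪ν, y - x0⟫ with hidef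
  by_contra hcon
  push_neg at hcon
  set T : ℝ := (ι + γ * ρ + ρy)/2 with hT
  have hT0 : 0 < T := by rw [hT]; linarith
  have hTρy : T < ρy := by rw [hT]; linarith
  set w : E := y - T • ν with hwdef
  have hwx0 : w - x0 = (y - x0) - T • ν := by rw [hwdef]; abel
  have hwball : w ∈ ball x0 ρ := by
    rw [mem_ball, dist_eq_norm, hwx0]
    calc ‖(y - x0) - T • ν‖ ≤ ‖y - x0‖ + ‖T • ν‖ := norm_sub_le _ _
      _ = ρy + T := by
          rw [norm_smul, Real.norm_eq_abs, abs_of_pos hT0, hν, mul_one, ← dist_eq_norm, ← hρy]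
      _ < ρ := by linarith
  have hwΩ : w ∉ Ω := by
    intro h
    have h2 := (hup ⟨h, hwball⟩).1
    simp only [mem_setOf_eq] at h2
    have h3 : ⟪ν, w - x0⟫ = ι - T := by
      rw [hwx0, inner_sub_right, real_inner_smul_right,
        real_inner_self_eq_norm_mul_norm, hν, ← hidef]
      ring
    rw [inner_sub_right] at h3
    have : ι - T < -(γ * ρ) := by rw [hT]; linarith
    linarith
  obtain ⟨p, hpseg, hpfr⟩ := cross_frontier ((convex_segment (𝕜 := ℝ) y w).isPreconnected)
    (left_mem_segment ℝ y w) hy (right_mem_segment ℝ y w) hwΩ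
  obtain ⟨a, b, ha, hb, hab, rfl⟩ := hpseg
  obtain rfl : a = 1 - b := by linarith
  have hdiff : y - ((1 - b) • y + b • w) = (b * T) • ν := by
    rw [hwdef, smul_sub, sub_smul, one_smul, smul_smul]
    abel
  have hdist : dist y ((1 - b) • y + b • w) = b * T := by
    rw [dist_eq_norm, hdiff, norm_smul, Real.norm_eq_abs, hν, mul_one,
      abs_of_nonneg (by positivity)]
  have hge := infDist_le_dist_of_mem (x := y) hpfr
  rw [hinf, hdist] at hge
  nlinarith

/-- Dyadic chain of line segments inside a Reifenberg flat domain. -/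
theorem dyadic_chain_reifenberg (d : ℕ) (hd : 2 ≤ d) (γ R0 : ℝ) (hγ0 : 0 ≤ γ)
    (hγ : γ ≤ 1 / 48) (hR0 : 0 < R0) (Ω : Set (Ed d)) (hΩo : IsOpen Ω)
    (hΩc : IsConnected Ω) (hreif : ReifenbergFlat Ω γ R0)
    (x0 : Ed d) (hx0 : x0 ∈ frontier Ω) (R : ℝ) (hR0' : 0 < R) (hRle : R ≤ R0) :
    ∃ x : ℕ → Ed d,
      (∀ k : ℕ, x k ∈ sphere x0 (R / 2 ^ (k + 1)) ∩ Ω) ∧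
      (∀ k : ℕ, segment ℝ (x k) (x (k + 1)) ⊆
        closure (ball x0 (R / 2 ^ (k + 1)) \ ball x0 (R / 2 ^ (k + 2))) ∩ Ω) ∧
      (∀ k : ℕ, dist (x k) (x (k + 1)) ≤ R / 2 ^ k) ∧
      (∀ k : ℕ, ∀ z ∈ segment ℝ (x k) (x (k + 1)),
        4 * γ * (R / 2 ^ k) < infDist z (frontier Ω)) ∧
      ∀ y ∈ Ω, infDist y (frontier Ω) = dist y x0 → dist y x0 ≤ R / 4 →
        ∃ k0 : ℕ,
          y ∈ closure (ball x0 (R / 2 ^ (k0 + 2))) ∩ Ω ∧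
          segment ℝ y (x k0) ⊆ closure (ball x0 (R / 2 ^ (k0 + 1))) ∩ Ω ∧
          dist y (x k0) ≤ R / 2 ^ k0 ∧
          ∀ z ∈ segment ℝ y (x k0), 4 * γ * (R / 2 ^ k0) < infDist z (frontier Ω) := by
  classical
  have hfr : (frontier Ω).Nonempty := ⟨x0, hx0⟩
  have hRk : ∀ k : ℕ, (0:ℝ) < R / 2 ^ k := fun k => by positivity
  have hRkle : ∀ k : ℕ, R / 2 ^ k ≤ R0 := fun k =>
    le_trans (div_le_self hR0'.le (by exact_mod_cast Nat.one_le_two_pow (n := k))) hRle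
  have hex : ∀ k : ℕ, ∃ ν : Ed d, ‖ν‖ = 1 ∧
      ({y | ⟪ν, x0⟫ + γ * (R / 2 ^ k) < ⟪ν, y⟫} ∩ ball x0 (R / 2 ^ k) ⊆
        Ω ∩ ball x0 (R / 2 ^ k)) ∧
      (Ω ∩ ball x0 (R / 2 ^ k) ⊆
        {y | ⟪ν, x0⟫ - γ * (R / 2 ^ k) < ⟪ν, y⟫} ∩ ball x0 (R / 2 ^ k)) :=
    fun k => hreif x0 hx0 (R / 2 ^ k) (hRk k) (hRkle k)
  choose ν hν hlow hup using hex
  have hhalf : ∀ k : ℕ, R / 2 ^ (k + 1) = (R / 2 ^ k) / 2 := by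
    intro k; rw [pow_succ]; ring
  have hquarter : ∀ k : ℕ, R / 2 ^ (k + 2) = (R / 2 ^ k) / 4 := by
    intro k; rw [pow_add]; norm_num; ring
  set x : ℕ → Ed d := fun k => x0 + (R / 2 ^ (k + 1)) • ν k with hxdef
  have hxx0 : ∀ k, x k - x0 = (R / 2 ^ (k + 1)) • ν k := by
    intro k; simp [hxdef]
  have hxn : ∀ k, ‖x k - x0‖ = R / 2 ^ (k + 1) := by
    intro k
    rw [hxx0, norm_smul, Real.norm_eq_abs, abs_of_pos (hRk (k+1)), hν, mul_one]
  have hinnerx : ∀ k, ⟪ν k, x k - x0⟫ = R / 2 ^ (k + 1) := by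
    intro k
    rw [hxx0, real_inner_smul_right, real_inner_self_eq_norm_mul_norm, hν k]; ring
  have hcs : ∀ k, 9/10 ≤ ⟪ν k, ν (k+1)⟫ := by
    intro k
    refine nu_close hγ0 hγ (hRk k) (hν k) (hν (k+1)) (hlow k) ?_
    have h := hup (k+1)
    rwa [hhalf k] at h
  have hinnerq : ∀ k, (R / 2 ^ (k + 2)) * (9/10) ≤ ⟪ν k, x (k+1) - x0⟫ := by
    intro k
    have h3 : (k+1) + 1 = k + 2 := rfl
    rw [hxx0, h3, real_inner_smul_right]
    have := hcs k
    nlinarith [hRk (k+2)]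
  have hseg : ∀ k, ∀ z ∈ segment ℝ (x k) (x (k+1)), z ∈ Ω ∧
      (R / 2 ^ k) / 10 ≤ infDist z (frontier Ω) ∧ ‖z - x0‖ ≤ R / 2 ^ (k+1) := by
    intro k z hz
    have h1 := hhalf k
    have h2 := hquarter k
    have h3 : (k+1) + 1 = k + 2 := rfl
    have hres := seg_in_domain (δ := (R / 2 ^ k)/10) (hν k) (hlow k) hΩo hfr
      (by positivity) ?_ ?_ ?_ ?_ z hz
    · refine ⟨hres.1, hres.2.1, ?_⟩
      refine le_trans hres.2.2 ?_
      rw [hxn k, hxn (k+1), h3]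
      have : R / 2 ^ (k+2) ≤ R / 2 ^ (k+1) := by rw [h1, h2]; linarith [hRk k]
      exact max_le le_rfl this
    · rw [hinnerx k, h1]
      nlinarith [hRk k]
    · refine le_trans ?_ (hinnerq k)
      rw [h2]
      nlinarith [hRk k]
    · rw [hxn k, h1]; nlinarith [hRk k]
    · rw [hxn (k+1), h3, h2]; nlinarith [hRk k]
  refine ⟨x, ?_, ?_, ?_, ?_, ?_⟩
  · -- sphere ∩ Ω
    intro k
    exact ⟨by rw [mem_sphere, dist_eq_norm, hxn], (hseg k (x k) (left_mem_segment ℝ _ _)).1⟩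
  · -- annulus
    intro k z hz
    obtain ⟨hzΩ, _, hzn⟩ := hseg k z hz
    refine ⟨?_, hzΩ⟩
    obtain ⟨a, b, ha, hb, hab, rfl⟩ := hz
    obtain rfl : b = 1 - a := by linarith
    have h3 : (k+1) + 1 = k + 2 := rfl
    have hzx : a • x k + (1-a) • x (k+1) - x0
        = (a * (R / 2 ^ (k+1))) • ν k + ((1-a) * (R / 2 ^ (k+2))) • ν (k+1) := by
      have hx0s : a • x0 + (1-a) • x0 = x0 := by rw [← add_smul, hab, one_smul]
      have e1 : a • x k + (1-a) • x (k+1) - x0 = a • (x k - x0) + (1-a) • (x (k+1) - x0) := by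
        conv_lhs => rw [← hx0s]
        simp only [smul_sub]
        abel
      rw [e1, hxx0 k, hxx0 (k+1), h3, smul_smul, smul_smul]
    have hn2 : ‖a • x k + (1-a) • x (k+1) - x0‖^2
        = (a * (R / 2 ^ (k+1)))^2 + 2 * ((a * (R / 2 ^ (k+1))) * ((1-a) * (R / 2 ^ (k+2)))
          * ⟪ν k, ν (k+1)⟫) + ((1-a) * (R / 2 ^ (k+2)))^2 := by
      rw [hzx, norm_add_sq_real, real_inner_smul_left, real_inner_smul_right]
      rw [norm_smul, norm_smul, Real.norm_eq_abs, Real.norm_eq_abs,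
        hν k, hν (k+1), mul_one, mul_one, sq_abs, sq_abs]
      ring
    have hlow2 : R / 2 ^ (k+2) ≤ ‖a • x k + (1-a) • x (k+1) - x0‖ := by
      have hsq : (R / 2 ^ (k+2))^2 ≤ ‖a • x k + (1-a) • x (k+1) - x0‖^2 := by
        rw [hn2, hhalf k, hquarter k]
        have hc := hcs k
        have hA : (0:ℝ) ≤ (a*a) * ((R / 2^k)*(R / 2^k)) := by positivity
        have hB : (0:ℝ) ≤ ((a*(1-a))*(2*⟪ν k, ν (k+1)⟫-1)) * ((R / 2^k)*(R / 2^k)) := by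
          apply mul_nonneg
          · exact mul_nonneg (mul_nonneg ha hb) (by linarith)
          · positivity
        nlinarith [hA, hB]
      exact le_of_pow_le_pow_left₀ (by norm_num) (norm_nonneg _) hsq
    have hrr : R / 2 ^ (k+2) < R / 2 ^ (k+1) := by
      rw [hhalf k, hquarter k]; linarith [hRk k]
    exact mem_closure_annulus (hRk (k+2)) hrr (by rw [dist_eq_norm]; exact hlow2)
      (by rw [dist_eq_norm]; exact hzn)
  · -- dist bound
    intro k
    calc dist (x k) (x (k+1)) ≤ dist (x k) x0 + dist x0 (x (k+1)) := dist_triangle _ _ _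
      _ = R / 2 ^ (k+1) + R / 2 ^ (k+2) := by
          rw [dist_eq_norm, hxn k, dist_comm, dist_eq_norm, hxn (k+1)]
      _ ≤ R / 2 ^ k := by rw [hhalf k, hquarter k]; linarith [hRk k]
  · -- infDist bound
    intro k z hz
    have := (hseg k z hz).2.1
    nlinarith [hRk k]
  · -- the point y
    intro y hyΩ hy1 hy2
    have hx0Ω : x0 ∉ Ω := by
      rw [hΩo.frontier_eq] at hx0; exact hx0.2
    have hρy0 : 0 < dist y x0 := dist_pos.2 (fun h => hx0Ω (h ▸ hyΩ))
    set ρy : ℝ := dist y x0 with hρydef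
    have hex2 : ∃ n : ℕ, R / 2 ^ (n+2) < ρy := by
      obtain ⟨n, hn⟩ := pow_unbounded_of_one_lt (R / ρy) (by norm_num : (1:ℝ) < 2)
      refine ⟨n, ?_⟩
      rw [div_lt_iff₀ (by positivity)]
      rw [div_lt_iff₀ hρy0] at hn
      have h4 : (2:ℝ)^(n+2) = 4 * 2^n := by rw [pow_add]; ring
      nlinarith [pow_pos (by norm_num : (0:ℝ) < 2) n]
    have hm := Nat.find_spec hex2
    have hm0 : Nat.find hex2 ≠ 0 := by
      intro h
      rw [h] at hm
      norm_num at hm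
      linarith
    obtain ⟨k0, hk0m⟩ : ∃ k0, Nat.find hex2 = k0 + 1 :=
      ⟨Nat.find hex2 - 1, (Nat.succ_pred_eq_of_pos (Nat.pos_of_ne_zero hm0)).symm⟩
    rw [hk0m] at hm
    have hupb : ρy ≤ R / 2 ^ (k0+2) := by
      have := Nat.find_min hex2 (by omega : k0 < Nat.find hex2)
      linarith [not_lt.1 this]
    have hlowb : R / 2 ^ (k0+3) < ρy := by
      have he3 : k0 + 1 + 2 = k0 + 3 := rfl
      rw [← he3]
      exact hm
    have hρpos : 0 < R / 2 ^ k0 := hRk k0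
    have hq : R / 2 ^ (k0+2) = (R / 2 ^ k0) / 4 := hquarter k0
    have hh : R / 2 ^ (k0+1) = (R / 2 ^ k0) / 2 := hhalf k0
    have he : R / 2 ^ (k0+3) = (R / 2 ^ k0) / 8 := by
      rw [pow_add]; norm_num; ring
    have hρy4 : ρy ≤ (R / 2 ^ k0) / 4 := by rw [← hq]; exact hupb
    have hρy8 : (R / 2 ^ k0) / 8 < ρy := by rw [← he]; exact hlowb
    have hγρ : γ * (R / 2 ^ k0) ≤ (R / 2 ^ k0) / 48 := by nlinarith
    have hι : ρy - γ * (R / 2 ^ k0) ≤ ⟪ν k0, y - x0⟫ :=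
      inner_lower_of_infDist hΩo hγ0 hρpos (hν k0) (hup k0) hyΩ hy1 (by linarith)
    have hδpos : (0:ℝ) < γ * (R / 2 ^ k0) + ρy / 2 := by positivity
    have hseg2 := seg_in_domain (p := y) (q := x k0) (δ := γ * (R / 2 ^ k0) + ρy / 2)
      (hν k0) (hlow k0) hΩo hfr hδpos
      (by nlinarith)
      (by rw [hinnerx k0, hh]; nlinarith)
      (by rw [← dist_eq_norm, ← hρydef]; nlinarith)
      (by rw [hxn k0, hh]; nlinarith)
    refine ⟨k0, ⟨?_, hyΩ⟩, ?_, ?_, ?_⟩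
    · rw [closure_ball x0 (ne_of_gt (hRk (k0+2)))]
      exact mem_closedBall.2 hupb
    · intro z hz
      obtain ⟨hzΩ, _, hzn⟩ := hseg2 z hz
      refine ⟨?_, hzΩ⟩
      rw [closure_ball x0 (ne_of_gt (hRk (k0+1)))]
      rw [mem_closedBall, dist_eq_norm]
      refine le_trans hzn ?_
      rw [hxn k0, ← dist_eq_norm, ← hρydef, hh]
      exact max_le (by linarith) le_rfl
    · calc dist y (x k0) ≤ dist y x0 + dist x0 (x k0) := dist_triangle _ _ _
        _ = ρy + R / 2 ^ (k0+1) := by rw [dist_comm x0, dist_eq_norm (x k0), hxn k0]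
        _ ≤ R / 2 ^ k0 := by rw [hh]; linarith
    · intro z hz
      have := (hseg2 z hz).2.1
      nlinarith
end
end

section
/- (Lipschitz parametrization of the connecting curve.) Let Ω ⊂ ℝ^d (d ≥ 2) be a domain satisfying Assumption A with γ ∈ (0,1/48] and radius R0 > 0. Suppose 0 ∈ ∂Ω and R ∈ (0, R0/4], and let z0 = (R/2, 0, …, 0) in the orthonormal coordinate system associated with the origin and radius 4R for which {y : 4γR < y_1} ∩ B_{4R} ⊆ Ω ∩ B_{4R} ⊆ {y : −4γR < y_1} ∩ B_{4R}. Then for any x ∈ Ω ∩ B_R there exists a map η : [0,1] → ℝ^d with η(0) = x, η(1) = z0, Lipschitz constant at most 5R, η(s) ∈ Ω ∩ B_{7R/4} for all s ∈ [0,1], and dist(η(s), ∂Ω) > Rs/(4·24·48) for all s ∈ [0,1]. -/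
open MeasureTheory Metric Set
open scoped ENNReal RealInnerProductSpace

set_option maxHeartbeats 4000000

noncomputable section

section AuxLemmas

variable {d : ℕ} {Ω : Set (Ed d)}

lemma aux_ball_subset (hΩo : IsOpen Ω) (hne : (frontier Ω).Nonempty) {y : Ed d}
    (hy : y ∈ Ω) : ball y (infDist y (frontier Ω)) ⊆ Ω := by
  intro z hz
  have hnu : Ω ≠ univ := by
    rintro rfl
    simp [frontier_univ] at hne
  obtain ⟨w, hw, hweq⟩ := exists_mem_frontier_infDist_compl_eq_dist hy hnu
  by_contra hzo
  have h1 : infDist y Ωᶜ ≤ dist y z := infDist_le_dist_of_mem hzo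
  have h2 : infDist y (frontier Ω) ≤ dist y w := infDist_le_dist_of_mem hw
  rw [mem_ball, dist_comm] at hz
  rw [hweq] at h1
  linarith

lemma aux_frontier_le (hΩo : IsOpen Ω) {ν' : Ed d} {a c r : ℝ} {w : Ed d}
    (I1 : {y | a + c < ⟪ν', y⟫} ∩ ball w r ⊆ Ω ∩ ball w r) {z : Ed d}
    (hz : z ∈ frontier Ω) (hzb : z ∈ ball w r) : ⟪ν', z⟫ ≤ a + c := by
  by_contra h
  push_neg at h
  have hzΩ : z ∈ Ω := (I1 ⟨h, hzb⟩).1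
  rw [hΩo.frontier_eq] at hz
  exact hz.2 hzΩ

lemma aux_infDist_ge (hΩo : IsOpen Ω) (hne : (frontier Ω).Nonempty) {ν' : Ed d}
    (hν' : ‖ν'‖ = 1) {a c r : ℝ} {w : Ed d}
    (I1 : {y | a + c < ⟪ν', y⟫} ∩ ball w r ⊆ Ω ∩ ball w r) (p : Ed d) :
    min (⟪ν', p⟫ - (a + c)) (r - dist p w) ≤ infDist p (frontier Ω) := by
  rw [← not_lt]
  intro hlt
  obtain ⟨z, hzF, hdz⟩ := (infDist_lt_iff hne).1 hlt
  rcases lt_or_ge (dist z w) r with hb | hb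
  · have hle : ⟪ν', z⟫ ≤ a + c := aux_frontier_le hΩo I1 hzF (mem_ball.2 hb)
    have hin : ⟪ν', p - z⟫ ≤ ‖ν'‖ * ‖p - z‖ := real_inner_le_norm _ _
    rw [hν', one_mul, ← dist_eq_norm] at hin
    rw [inner_sub_right] at hin
    have : min (⟪ν', p⟫ - (a + c)) (r - dist p w) ≤ ⟪ν', p⟫ - ⟪ν', z⟫ := by
      have := min_le_left (⟪ν', p⟫ - (a + c)) (r - dist p w)
      linarith
    linarith
  · have htri : dist z w ≤ dist z p + dist p w := dist_triangle z p w
    have := min_le_right (⟪ν', p⟫ - (a + c)) (r - dist p w)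
    rw [dist_comm z p] at htri
    linarith

lemma aux_height (hΩo : IsOpen Ω) (hne : (frontier Ω).Nonempty) {ν' : Ed d}
    (hν' : ‖ν'‖ = 1) {a c r : ℝ} {w : Ed d}
    (I2 : Ω ∩ ball w r ⊆ {y | a - c < ⟪ν', y⟫} ∩ ball w r) {y : Ed d} (hy : y ∈ Ω)
    (hball : dist y w + infDist y (frontier Ω) ≤ r)
    (hδ : 0 < infDist y (frontier Ω)) :
    a + infDist y (frontier Ω) - c ≤ ⟪ν', y⟫ := by
  set δ := infDist y (frontier Ω) with hδdef
  by_contra hcon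
  push_neg at hcon
  set t := ⟪ν', y⟫ - a + c with ht
  have hyb : y ∈ ball w r := by
    rw [mem_ball]; linarith
  have ht0 : 0 < t := by
    have := (I2 ⟨hy, hyb⟩).1
    simp only [mem_setOf_eq] at this
    linarith
  have htδ : t < δ := by linarith
  set p := y - t • ν' with hp
  have hpy : dist p y = t := by
    rw [dist_eq_norm, hp, sub_sub_cancel_left, norm_neg, norm_smul, hν',
      Real.norm_eq_abs, abs_of_pos ht0, mul_one]
  have hpΩ : p ∈ Ω := aux_ball_subset hΩo hne hy (by rw [mem_ball, hpy]; exact htδ)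
  have hpb : p ∈ ball w r := by
    rw [mem_ball]
    calc dist p w ≤ dist p y + dist y w := dist_triangle p y w
    _ < δ + dist y w := by rw [hpy]; linarith
    _ ≤ r := by linarith
  have := (I2 ⟨hpΩ, hpb⟩).1
  simp only [mem_setOf_eq] at this
  rw [hp, inner_sub_right, real_inner_smul_right, real_inner_self_eq_norm_sq, hν',
    one_pow, mul_one] at this
  linarith

lemma aux_step (hΩo : IsOpen Ω) (hne : (frontier Ω).Nonempty) {γ R0 : ℝ}
    (hγ0 : 0 < γ) (hγ : γ ≤ 1 / 48) (hreif : ReifenbergFlat Ω γ R0) {y : Ed d}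
    (hy : y ∈ Ω) (hpos : 0 < infDist y (frontier Ω))
    (h8 : 8 * infDist y (frontier Ω) ≤ R0) :
    ∃ e : Ed d, ‖e‖ = 1 ∧ ∀ t ∈ Icc (0:ℝ) (infDist y (frontier Ω)),
      y + t • e ∈ Ω ∧ 2 * infDist y (frontier Ω) / 3 + t ≤ infDist (y + t • e) (frontier Ω) := by
  set δ := infDist y (frontier Ω) with hδdef
  obtain ⟨w, hwF, hδw⟩ := isClosed_frontier.exists_infDist_eq_dist hne y
  obtain ⟨ν', hν'1, I1, I2⟩ := hreif w hwF (8 * δ) (by linarith) h8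
  set a := ⟪ν', w⟫ with ha
  have hγr : γ * (8 * δ) ≤ δ / 6 := by nlinarith
  have hh : a + δ - γ * (8 * δ) ≤ ⟪ν', y⟫ := by
    refine aux_height hΩo hne hν'1 I2 hy ?_ hpos
    rw [← hδdef, ← hδw]
    linarith
  refine ⟨ν', hν'1, fun t ht => ?_⟩
  obtain ⟨ht0, htδ⟩ := ht
  set p := y + t • ν' with hp
  have hpy : dist p y = t := by
    rw [dist_eq_norm, hp, add_sub_cancel_left, norm_smul, hν'1, Real.norm_eq_abs,
      abs_of_nonneg ht0, mul_one]
  have hip : ⟪ν', p⟫ = ⟪ν', y⟫ + t := by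
    rw [hp, inner_add_right, real_inner_smul_right, real_inner_self_eq_norm_sq, hν'1,
      one_pow, mul_one]
  have hdp : dist p w ≤ 2 * δ := by
    calc dist p w ≤ dist p y + dist y w := dist_triangle p y w
    _ ≤ 2 * δ := by rw [hpy, ← hδw]; linarith
  have hpb : p ∈ ball w (8 * δ) := by rw [mem_ball]; linarith
  have hmem : p ∈ Ω := by
    refine (I1 ⟨?_, hpb⟩).1
    simp only [mem_setOf_eq]
    linarith
  refine ⟨hmem, ?_⟩
  have := aux_infDist_ge hΩo hne hν'1 I1 p
  have h1 : 2 * δ / 3 + t ≤ ⟪ν', p⟫ - (a + γ * (8 * δ)) := by linarith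
  have h2 : 2 * δ / 3 + t ≤ 8 * δ - dist p w := by linarith
  calc 2 * δ / 3 + t ≤ min (⟪ν', p⟫ - (a + γ * (8 * δ))) (8 * δ - dist p w) := le_min h1 h2
  _ ≤ _ := this

lemma aux_concat_lip {E : Type*} [PseudoMetricSpace E] {f g : ℝ → E} {a b : ℝ}
    (ha : 0 ≤ a) (hb : 0 ≤ b) (hf : LipschitzOnWith 1 f (Icc 0 a))
    (hg : LipschitzOnWith 1 g (Icc 0 b)) (hfg : f a = g 0) :
    LipschitzOnWith 1 (fun u => if u ≤ a then f u else g (u - a)) (Icc 0 (a + b)) := by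
  rw [lipschitzOnWith_iff_dist_le_mul] at hf hg ⊢
  have key : ∀ u ∈ Icc (0:ℝ) (a + b), ∀ v ∈ Icc (0:ℝ) (a + b), u ≤ v →
      dist (if u ≤ a then f u else g (u - a)) (if v ≤ a then f v else g (v - a)) ≤ v - u := by
    intro u hu v hv huv
    by_cases h1 : u ≤ a <;> by_cases h2 : v ≤ a
    · rw [if_pos h1, if_pos h2]
      have := hf u ⟨hu.1, h1⟩ v ⟨hv.1, h2⟩
      rw [NNReal.coe_one, one_mul, Real.dist_eq, abs_of_nonpos (by linarith)] at this
      linarith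
    · rw [if_pos h1, if_neg h2]
      push_neg at h2
      have e1 := hf u ⟨hu.1, h1⟩ a ⟨ha, le_refl a⟩
      have e2 := hg 0 ⟨le_refl 0, hb⟩ (v - a) ⟨by linarith, by linarith [hv.2]⟩
      rw [NNReal.coe_one, one_mul, Real.dist_eq, abs_of_nonpos (by linarith)] at e1
      rw [NNReal.coe_one, one_mul, Real.dist_eq, abs_of_nonpos (by linarith)] at e2
      rw [hfg] at e1
      calc dist (f u) (g (v - a)) ≤ dist (f u) (g 0) + dist (g 0) (g (v - a)) :=
            dist_triangle _ _ _
      _ ≤ v - u := by linarith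
    · exact absurd (huv.trans h2) h1
    · rw [if_neg h1, if_neg h2]
      push_neg at h1
      have := hg (u - a) ⟨by linarith, by linarith [hu.2]⟩ (v - a) ⟨by linarith, by linarith [hv.2]⟩
      rw [NNReal.coe_one, one_mul, Real.dist_eq, abs_of_nonpos (by linarith)] at this
      linarith
  intro u hu v hv
  rw [NNReal.coe_one, one_mul]
  rcases le_total u v with h | h
  · have := key u hu v hv h
    rw [Real.dist_eq, abs_of_nonpos (by linarith)]
    linarith
  · have := key v hv u hu h
    rw [dist_comm, Real.dist_eq, abs_of_nonneg (by linarith)]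
    linarith

lemma aux_concat_end {E : Type*} {f g : ℝ → E} {a b : ℝ} (hb : 0 ≤ b) (hfg : f a = g 0) :
    (if a + b ≤ a then f (a + b) else g (a + b - a)) = g b := by
  by_cases h : b = 0
  · subst h
    rw [if_pos (by linarith), add_zero, hfg]
  · have hb' : 0 < b := lt_of_le_of_ne hb (Ne.symm h)
    rw [if_neg (by linarith), add_sub_cancel_left]

lemma aux_line_lip (y e : Ed d) (he : ‖e‖ ≤ 1) (s : Set ℝ) :
    LipschitzOnWith 1 (fun t : ℝ => y + t • e) s := by
  rw [lipschitzOnWith_iff_dist_le_mul]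
  intro u _ v _
  rw [NNReal.coe_one, one_mul, dist_eq_norm, add_sub_add_left_eq_sub, ← sub_smul,
    norm_smul, Real.dist_eq, Real.norm_eq_abs]
  exact mul_le_of_le_one_right (abs_nonneg _) he

lemma aux_climb (hΩo : IsOpen Ω) (hne : (frontier Ω).Nonempty) {γ R0 R : ℝ}
    (hγ0 : 0 < γ) (hγ : γ ≤ 1 / 48) (hreif : ReifenbergFlat Ω γ R0)
    (hR : 0 < R) (hRle : R ≤ R0 / 4) :
    ∀ n : ℕ, ∀ y : Ed d, y ∈ Ω → R / 10 * (3 / 5) ^ n ≤ infDist y (frontier Ω) →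
    ∃ z ℓ, ∃ p : ℝ → Ed d, 0 ≤ ℓ ∧ LipschitzOnWith 1 p (Icc 0 ℓ) ∧ p 0 = y ∧ p ℓ = z ∧
      R / 10 ≤ infDist z (frontier Ω) ∧
      ℓ ≤ 3 / 2 * (infDist z (frontier Ω) - infDist y (frontier Ω)) ∧
      ((ℓ = 0 ∧ z = y) ∨ infDist z (frontier Ω) ≤ R / 5) ∧
      ∀ t ∈ Icc (0:ℝ) ℓ, p t ∈ Ω ∧
        t / 4 + 2 / 3 * infDist y (frontier Ω) ≤ infDist (p t) (frontier Ω) := by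
  intro n
  induction n with
  | zero =>
    intro y hy hlow
    rw [pow_zero, mul_one] at hlow
    exact ⟨y, 0, fun _ => y, le_refl 0,
      (((LipschitzWith.const y).weaken zero_le_one)).lipschitzOnWith, rfl, rfl, hlow, by linarith,
      Or.inl ⟨rfl, rfl⟩, fun t ht => by
        have : t = 0 := le_antisymm ht.2 ht.1
        exact ⟨hy, by rw [this]; linarith⟩⟩
  | succ n ih =>
    intro y hy hlow
    by_cases hbig : R / 10 ≤ infDist y (frontier Ω)
    · exact ⟨y, 0, fun _ => y, le_refl 0,
        (((LipschitzWith.const y).weaken zero_le_one)).lipschitzOnWith, rfl, rfl, hbig, by linarith,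
        Or.inl ⟨rfl, rfl⟩, fun t ht => by
          have : t = 0 := le_antisymm ht.2 ht.1
          exact ⟨hy, by rw [this]; linarith⟩⟩
    push_neg at hbig
    set δ := infDist y (frontier Ω) with hδdef
    have hpow : (0:ℝ) < (3 / 5 : ℝ) ^ (n + 1) := by positivity
    have hδpos : 0 < δ := lt_of_lt_of_le (by positivity) hlow
    have h8 : 8 * δ ≤ R0 := by linarith
    obtain ⟨e, he1, hstep⟩ := aux_step hΩo hne hγ0 hγ hreif hy hδpos h8
    set y' := y + δ • e with hy'def
    obtain ⟨hy'Ω, hy'd⟩ := hstep δ ⟨le_of_lt hδpos, le_refl δ⟩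
    have hδ' : 5 / 3 * δ ≤ infDist y' (frontier Ω) := by
      rw [hy'def]; linarith [hy'd]
    have hdyy' : dist y' y = δ := by
      rw [hy'def, dist_eq_norm, add_sub_cancel_left, norm_smul, he1, Real.norm_eq_abs,
        abs_of_pos hδpos, mul_one]
    have hlow' : R / 10 * (3 / 5) ^ n ≤ infDist y' (frontier Ω) := by
      have h1 : R / 10 * (3 / 5) ^ (n + 1) = R / 10 * (3 / 5) ^ n * (3 / 5) := by ring
      have h2 : R / 10 * (3 / 5) ^ n * (3 / 5) ≤ δ := by rw [← h1]; exact hlow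
      linarith
    obtain ⟨z, ℓ', p', hℓ'0, hlip', hp'0, hp'ℓ, hz10, hz32, hzdisj, hzprop⟩ := ih y' hy'Ω hlow'
    set δz := infDist z (frontier Ω) with hδzdef
    refine ⟨z, δ + ℓ', fun u => if u ≤ δ then y + u • e else p' (u - δ), by linarith,
      ?_, ?_, ?_, hz10, ?_, ?_, ?_⟩
    · exact aux_concat_lip (le_of_lt hδpos) hℓ'0 (aux_line_lip y e (le_of_eq he1) _) hlip'
        (by rw [hp'0, hy'def])
    · show (if (0:ℝ) ≤ δ then y + (0:ℝ) • e else p' (0 - δ)) = y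
      rw [if_pos (le_of_lt hδpos), zero_smul, add_zero]
    · show (if δ + ℓ' ≤ δ then y + (δ + ℓ') • e else p' (δ + ℓ' - δ)) = z
      by_cases h : ℓ' = 0
      · subst h
        rw [if_pos (by linarith), add_zero, ← hp'ℓ, hp'0, hy'def]
      · have hℓ'pos : 0 < ℓ' := lt_of_le_of_ne hℓ'0 (Ne.symm h)
        rw [if_neg (by linarith), add_sub_cancel_left, hp'ℓ]
    · have : 5 / 3 * δ ≤ infDist z (frontier Ω) - ℓ' * (2/3) := by
        nlinarith [hδ', hz32]
      linarith [hz32, hδ']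
    · rcases hzdisj with ⟨hl0, hzy⟩ | hr
      · right
        have : infDist z (frontier Ω) ≤ infDist y (frontier Ω) + dist z y := infDist_le_infDist_add_dist
        rw [hzy] at *
        calc infDist y' (frontier Ω) ≤ infDist y (frontier Ω) + dist y' y :=
              infDist_le_infDist_add_dist
        _ ≤ 2 * δ := by rw [hdyy']; linarith
        _ ≤ R / 5 := by linarith
      · exact Or.inr hr
    · intro t ht
      by_cases htδ : t ≤ δ
      · have heq : (fun u => if u ≤ δ then y + u • e else p' (u - δ)) t = y + t • e := by
          simp [htδ]
        rw [heq]
        obtain ⟨hm, hd⟩ := hstep t ⟨ht.1, htδ⟩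
        exact ⟨hm, by linarith [ht.1]⟩
      · have heq : (fun u => if u ≤ δ then y + u • e else p' (u - δ)) t = p' (t - δ) := by
          simp [htδ]
        rw [heq]
        push_neg at htδ
        have hu : t - δ ∈ Icc (0:ℝ) ℓ' := ⟨by linarith, by linarith [ht.2]⟩
        obtain ⟨hm, hd⟩ := hzprop (t - δ) hu
        refine ⟨hm, ?_⟩
        have : (t - δ) / 4 + 2 / 3 * infDist y' (frontier Ω) ≤ infDist (p' (t - δ)) (frontier Ω) := hd
        have h2 : 2 / 3 * (5 / 3 * δ) ≤ 2 / 3 * infDist y' (frontier Ω) := by linarith [hδ']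
        linarith

end AuxLemmas

/-- Lipschitz parametrization of the curve joining a point of `Ω ∩ B_R` to the "center"
`z0 = (R/2)ν`, growing linearly away from the boundary. -/
theorem curve_lipschitz_parametrization_reifenberg (d : ℕ) (hd : 2 ≤ d) (γ R0 : ℝ)
    (hγ0 : 0 < γ) (hγ : γ ≤ 1 / 48) (hR0 : 0 < R0) (Ω : Set (Ed d)) (hΩo : IsOpen Ω)
    (hΩc : IsConnected Ω) (hreif : ReifenbergFlat Ω γ R0)
    (h0 : (0 : Ed d) ∈ frontier Ω) (R : ℝ) (hR : 0 < R) (hRle : R ≤ R0 / 4)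
    (ν : Ed d) (hν : ‖ν‖ = 1)
    (hincl1 : {y | γ * (4 * R) < ⟪ν, y⟫} ∩ ball (0 : Ed d) (4 * R) ⊆ Ω ∩ ball 0 (4 * R))
    (hincl2 : Ω ∩ ball (0 : Ed d) (4 * R) ⊆ {y | -(γ * (4 * R)) < ⟪ν, y⟫} ∩ ball 0 (4 * R))
    (x : Ed d) (hx : x ∈ Ω ∩ ball (0 : Ed d) R) :
    ∃ η : ℝ → Ed d,
      LipschitzOnWith (Real.toNNReal (5 * R)) η (Icc 0 1) ∧
      η 0 = x ∧ η 1 = (R / 2) • ν ∧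
      (∀ s ∈ Icc (0:ℝ) 1, η s ∈ Ω ∩ ball (0 : Ed d) (7 * R / 4)) ∧
      (∀ s ∈ Icc (0:ℝ) 1, R * s / (4 * 24 * 48) < infDist (η s) (frontier Ω)) := by
  obtain ⟨hxΩ, hxb⟩ := hx
  have hne : (frontier Ω).Nonempty := ⟨0, h0⟩
  have hγ4R : γ * (4 * R) ≤ R / 12 := by nlinarith
  have I1top : {y | (0:ℝ) + γ * (4 * R) < ⟪ν, y⟫} ∩ ball (0 : Ed d) (4 * R)
      ⊆ Ω ∩ ball 0 (4 * R) := by simpa using hincl1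
  have I2top : Ω ∩ ball (0 : Ed d) (4 * R)
      ⊆ {y | (0:ℝ) - γ * (4 * R) < ⟪ν, y⟫} ∩ ball 0 (4 * R) := by
    simpa [zero_sub] using hincl2
  have hxF : x ∉ frontier Ω := by rw [hΩo.frontier_eq]; exact fun h => h.2 hxΩ
  have hδ0 : 0 < infDist x (frontier Ω) :=
    (isClosed_frontier.notMem_iff_infDist_pos hne).1 hxF
  set δ0 := infDist x (frontier Ω) with hδ0def
  have hxn : dist x 0 < R := mem_ball.1 hxb
  have hδ0R : δ0 < R := lt_of_le_of_lt (infDist_le_dist_of_mem h0) hxn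
  obtain ⟨n, hn⟩ := exists_pow_lt_of_lt_one
    (show (0:ℝ) < δ0 / (R / 10) by positivity) (show (3/5 : ℝ) < 1 by norm_num)
  have hlow : R / 10 * (3/5) ^ n ≤ δ0 := by
    rw [lt_div_iff₀ (by positivity : (0:ℝ) < R / 10)] at hn
    nlinarith [hn]
  obtain ⟨z, ℓc, pc, hℓc0, hlipc, hpc0, hpcl, hz10, hlc32, hdisj, hclimb⟩ :=
    aux_climb hΩo hne hγ0 hγ hreif hR hRle n x hxΩ hlow
  set δz := infDist z (frontier Ω) with hδzdef
  have hzΩ : z ∈ Ω := by rw [← hpcl]; exact (hclimb ℓc ⟨hℓc0, le_refl ℓc⟩).1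
  have hδzpos : 0 < δz := lt_of_lt_of_le (by positivity) hz10
  have hδzR : δz < R := by
    rcases hdisj with ⟨-, rfl⟩ | hr
    · exact hδ0R
    · linarith
  have hlipc' := lipschitzOnWith_iff_dist_le_mul.1 hlipc
  have hpcdist : ∀ u ∈ Icc (0:ℝ) ℓc, dist (pc u) x ≤ u := by
    intro u hu
    have h1 := hlipc' u hu 0 ⟨le_refl 0, hℓc0⟩
    rw [hpc0, NNReal.coe_one, one_mul, Real.dist_eq, sub_zero, abs_of_nonneg hu.1] at h1
    exact h1
  have hzx : dist z x ≤ ℓc := by rw [← hpcl]; exact hpcdist ℓc ⟨hℓc0, le_refl ℓc⟩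
  have hzn : dist z 0 ≤ dist x 0 + ℓc := by
    calc dist z 0 ≤ dist z x + dist x 0 := dist_triangle z x 0
    _ ≤ dist x 0 + ℓc := by linarith
  have hlcδz : ℓc ≤ 3/2 * δz := by linarith
  have hzball : dist z 0 + δz ≤ 4 * R := by linarith
  have hh0 : (0:ℝ) + δz - γ * (4 * R) ≤ ⟪ν, z⟫ := aux_height hΩo hne hν I2top hzΩ hzball hδzpos
  have hh : δz - R/12 ≤ ⟪ν, z⟫ := by linarith
  have hh60 : R/60 ≤ ⟪ν, z⟫ := by linarith
  have hhub : ⟪ν, z⟫ ≤ dist z 0 := by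
    have h1 := real_inner_le_norm ν z
    rw [hν, one_mul] at h1
    rw [dist_zero_right]
    exact h1
  set ℓv := max (R/2 - ⟪ν, z⟫) 0 with hℓvdef
  have hℓv0 : 0 ≤ ℓv := le_max_right _ _
  have hℓvle : ℓv ≤ R/2 - R/60 := max_le (by linarith) (by linarith)
  set q := z + ℓv • ν with hqdef
  have hqh : ⟪ν, q⟫ = ⟪ν, z⟫ + ℓv := by
    rw [hqdef, inner_add_right, real_inner_smul_right, real_inner_self_eq_norm_sq, hν,
      one_pow, mul_one]
  have hqh2 : R/2 ≤ ⟪ν, q⟫ := by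
    rw [hqh]
    rcases le_total (R/2 - ⟪ν, z⟫) 0 with hc | hc
    · rw [hℓvdef, max_eq_right hc]; linarith
    · rw [hℓvdef, max_eq_left hc]; linarith
  have hqz : dist q z = ℓv := by
    rw [hqdef, dist_eq_norm, add_sub_cancel_left, norm_smul, hν, Real.norm_eq_abs,
      abs_of_nonneg hℓv0, mul_one]
  have hqn : dist q 0 ≤ dist x 0 + ℓc + ℓv := by
    calc dist q 0 ≤ dist q z + dist z 0 := dist_triangle q z 0
    _ ≤ dist x 0 + ℓc + ℓv := by rw [hqz]; linarith
  set B := dist x 0 + ℓc + ℓv with hBdef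
  have hBR : B < 7*R/4 := by
    rcases hdisj with ⟨hl0, rfl⟩ | hr
    · rw [hBdef, hl0]; linarith
    · have hℓv' : ℓv ≤ 7*R/12 - δz := max_le (by linarith) (by linarith)
      rw [hBdef]; linarith
  have hBhalf : R/2 ≤ B := by rw [hBdef]; linarith [hqh2, hqh, hhub, hzn]
  set z₀ := (R/2) • ν with hz₀def
  have hz0norm : ‖z₀‖ = R/2 := by
    rw [hz₀def, norm_smul, hν, Real.norm_eq_abs, abs_of_pos (by linarith), mul_one]
  have hz0n : dist z₀ 0 = R/2 := by rw [dist_zero_right, hz0norm]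
  have hz0h : ⟪ν, z₀⟫ = R/2 := by
    rw [hz₀def, real_inner_smul_right, real_inner_self_eq_norm_sq, hν, one_pow, mul_one]
  set ℓh := dist z₀ q with hℓhdef
  have hℓh0 : 0 ≤ ℓh := dist_nonneg
  have hℓhle : ℓh ≤ R/2 + B := by
    calc ℓh ≤ dist z₀ 0 + dist 0 q := dist_triangle z₀ 0 q
    _ ≤ R/2 + B := by rw [hz0n, dist_comm]; linarith [hqn]
  set hor := fun τ : ℝ => q + (τ * ℓh⁻¹) • (z₀ - q) with hhordef
  have hor0 : hor 0 = q := by rw [hhordef]; simp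
  have horend : hor ℓh = z₀ := by
    by_cases hc : ℓh = 0
    · have hqz0 : z₀ = q := by rw [← dist_eq_zero, ← hℓhdef]; exact hc
      rw [hc, hor0, hqz0]
    · rw [hhordef]
      show q + (ℓh * ℓh⁻¹) • (z₀ - q) = z₀
      rw [mul_inv_cancel₀ hc, one_smul, add_sub_cancel]
  have hlip_hor : LipschitzOnWith 1 hor (Icc 0 ℓh) := by
    rw [lipschitzOnWith_iff_dist_le_mul]
    intro u _ v _
    rw [NNReal.coe_one, one_mul, hhordef]
    show dist (q + (u * ℓh⁻¹) • (z₀ - q)) (q + (v * ℓh⁻¹) • (z₀ - q)) ≤ dist u v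
    rw [dist_eq_norm, add_sub_add_left_eq_sub, ← sub_smul, ← sub_mul, norm_smul,
      Real.norm_eq_abs, abs_mul, abs_of_nonneg (inv_nonneg.2 hℓh0), Real.dist_eq]
    have hzq : ‖z₀ - q‖ = ℓh := by rw [← dist_eq_norm, hℓhdef]
    rw [hzq, mul_assoc]
    have : ℓh⁻¹ * ℓh ≤ 1 := by
      by_cases hc : ℓh = 0
      · rw [hc]; simp
      · rw [inv_mul_cancel₀ hc]
    calc |u - v| * (ℓh⁻¹ * ℓh) ≤ |u - v| * 1 := by
          exact mul_le_mul_of_nonneg_left this (abs_nonneg _)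
    _ = |u - v| := mul_one _
  have hconv : ∀ τ ∈ Icc (0:ℝ) ℓh, R/2 ≤ ⟪ν, hor τ⟫ ∧ dist (hor τ) 0 ≤ B := by
    intro τ hτ
    set lam := τ * ℓh⁻¹ with hlam
    have hlam0 : 0 ≤ lam := mul_nonneg hτ.1 (inv_nonneg.2 hℓh0)
    have hlam1 : lam ≤ 1 := by
      by_cases hc : ℓh = 0
      · rw [hlam, hc]; simp
      · rw [hlam, ← inv_mul_cancel₀ hc, mul_comm ℓh⁻¹ ℓh]
        exact mul_le_mul_of_nonneg_right hτ.2 (inv_nonneg.2 hℓh0)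
    have hital : hor τ = q + lam • (z₀ - q) := by rw [hhordef]
    constructor
    · have hi : ⟪ν, hor τ⟫ = ⟪ν, q⟫ + lam * (⟪ν, z₀⟫ - ⟪ν, q⟫) := by
        rw [hital, inner_add_right, real_inner_smul_right, inner_sub_right]
      rw [hi, hz0h]
      nlinarith [hqh2, hlam0, hlam1]
    · have hrw : hor τ = (1 - lam) • q + lam • z₀ := by rw [hital]; module
      rw [hrw, dist_zero_right]
      have hqB : ‖q‖ ≤ B := by rw [← dist_zero_right]; exact hqn
      calc ‖(1 - lam) • q + lam • z₀‖ ≤ ‖(1 - lam) • q‖ + ‖lam • z₀‖ := norm_add_le _ _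
      _ = (1 - lam) * ‖q‖ + lam * (R/2) := by
          rw [norm_smul, norm_smul, Real.norm_eq_abs, abs_of_nonneg (by linarith),
            Real.norm_eq_abs, abs_of_nonneg hlam0, hz0norm]
      _ ≤ B := by nlinarith [hqB, hBhalf, hlam0, hlam1]
  set QP := fun u : ℝ => if u ≤ ℓv then z + u • ν else hor (u - ℓv) with hQPdef
  have hQlip : LipschitzOnWith 1 QP (Icc 0 (ℓv + ℓh)) := by
    have hjunc : (fun t : ℝ => z + t • ν) ℓv = hor 0 := by
      show z + ℓv • ν = hor 0
      rw [hor0, hqdef]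
    exact aux_concat_lip hℓv0 hℓh0 (aux_line_lip z ν (le_of_eq hν) (Icc 0 ℓv)) hlip_hor hjunc
  have hQP0 : QP 0 = z := by
    rw [hQPdef]
    show (if (0:ℝ) ≤ ℓv then z + (0:ℝ) • ν else hor (0 - ℓv)) = z
    rw [if_pos hℓv0, zero_smul, add_zero]
  have hQPend : QP (ℓv + ℓh) = z₀ := by
    rw [hQPdef]
    show (if ℓv + ℓh ≤ ℓv then z + (ℓv + ℓh) • ν else hor (ℓv + ℓh - ℓv)) = z₀
    have hjunc : (fun t : ℝ => z + t • ν) ℓv = hor 0 := by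
      show z + ℓv • ν = hor 0
      rw [hor0, hqdef]
    have : (if ℓv + ℓh ≤ ℓv then (fun t : ℝ => z + t • ν) (ℓv + ℓh) else hor (ℓv + ℓh - ℓv))
        = hor ℓh := aux_concat_end (f := fun t : ℝ => z + t • ν) (g := hor) (a := ℓv) hℓh0 hjunc
    rw [this, horend]
  have hQprop : ∀ u ∈ Icc (0:ℝ) (ℓv + ℓh), QP u ∈ Ω ∧ dist (QP u) 0 ≤ B ∧
      R/60 ≤ infDist (QP u) (frontier Ω) := by
    intro u hu
    by_cases huv : u ≤ ℓv
    · have heq : QP u = z + u • ν := by rw [hQPdef]; simp [huv]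
      rw [heq]
      have hdz : dist (z + u • ν) z = u := by
        rw [dist_eq_norm, add_sub_cancel_left, norm_smul, hν, Real.norm_eq_abs,
          abs_of_nonneg hu.1, mul_one]
      have hnorm : dist (z + u • ν) 0 ≤ B := by
        calc dist (z + u • ν) 0 ≤ dist (z + u • ν) z + dist z 0 := dist_triangle _ z 0
        _ ≤ B := by rw [hdz, hBdef]; linarith
      have hheight : ⟪ν, z + u • ν⟫ = ⟪ν, z⟫ + u := by
        rw [inner_add_right, real_inner_smul_right, real_inner_self_eq_norm_sq, hν,
          one_pow, mul_one]
      have hmem : z + u • ν ∈ Ω := by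
        rcases lt_or_ge u δz with hc | hc
        · exact aux_ball_subset hΩo hne hzΩ (mem_ball.2 (by rw [hdz]; exact hc))
        · refine (I1top ⟨?_, ?_⟩).1
          · show (0:ℝ) + γ * (4 * R) < ⟪ν, z + u • ν⟫
            rw [hheight]; linarith
          · exact mem_ball.2 (by linarith)
      refine ⟨hmem, hnorm, ?_⟩
      rcases le_total u (R/12) with hc | hc
      · have h1 : δz ≤ infDist (z + u • ν) (frontier Ω) + dist z (z + u • ν) :=
          infDist_le_infDist_add_dist
        rw [dist_comm, hdz] at h1
        linarith
      · have h3 := aux_infDist_ge hΩo hne hν I1top (z + u • ν)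
        have h1 : R/60 ≤ ⟪ν, z + u • ν⟫ - ((0:ℝ) + γ * (4 * R)) := by
          rw [hheight]; linarith
        have h2 : R/60 ≤ 4 * R - dist (z + u • ν) 0 := by linarith
        exact le_trans (le_min h1 h2) h3
    · push_neg at huv
      have heq : QP u = hor (u - ℓv) := by rw [hQPdef]; simp [not_le.2 huv]
      rw [heq]
      obtain ⟨hhh, hhn⟩ := hconv (u - ℓv) ⟨by linarith, by linarith [hu.2]⟩
      have hmem : hor (u - ℓv) ∈ Ω := by
        refine (I1top ⟨?_, ?_⟩).1
        · show (0:ℝ) + γ * (4 * R) < ⟪ν, hor (u - ℓv)⟫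
          linarith
        · exact mem_ball.2 (by linarith)
      refine ⟨hmem, hhn, ?_⟩
      have h3 := aux_infDist_ge hΩo hne hν I1top (hor (u - ℓv))
      have h1 : R/60 ≤ ⟪ν, hor (u - ℓv)⟫ - ((0:ℝ) + γ * (4 * R)) := by linarith
      have h2 : R/60 ≤ 4 * R - dist (hor (u - ℓv)) 0 := by linarith
      exact le_trans (le_min h1 h2) h3
  set P := fun u : ℝ => if u ≤ ℓc then pc u else QP (u - ℓc) with hPdef
  set L := ℓc + (ℓv + ℓh) with hLdef
  have hL0 : 0 ≤ L := by rw [hLdef]; linarith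
  have hPlip : LipschitzOnWith 1 P (Icc 0 L) :=
    aux_concat_lip hℓc0 (by linarith) hlipc hQlip (by rw [hpcl, hQP0])
  have hP0 : P 0 = x := by
    rw [hPdef]
    show (if (0:ℝ) ≤ ℓc then pc 0 else QP (0 - ℓc)) = x
    rw [if_pos hℓc0, hpc0]
  have hPend : P L = z₀ := by
    rw [hPdef, hLdef]
    show (if ℓc + (ℓv + ℓh) ≤ ℓc then pc (ℓc + (ℓv + ℓh)) else QP (ℓc + (ℓv + ℓh) - ℓc)) = z₀
    rw [aux_concat_end (by linarith : (0:ℝ) ≤ ℓv + ℓh) (by rw [hpcl, hQP0]), hQPend]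
  have hPprop : ∀ u ∈ Icc (0:ℝ) L, P u ∈ Ω ∧ dist (P u) 0 ≤ B ∧
      min (u/4 + 2/3 * δ0) (R/60) ≤ infDist (P u) (frontier Ω) := by
    intro u hu
    by_cases huc : u ≤ ℓc
    · have heq : P u = pc u := by rw [hPdef]; simp [huc]
      rw [heq]
      obtain ⟨hm, hd⟩ := hclimb u ⟨hu.1, huc⟩
      refine ⟨hm, ?_, le_trans (min_le_left _ _) hd⟩
      calc dist (pc u) 0 ≤ dist (pc u) x + dist x 0 := dist_triangle _ x 0
      _ ≤ B := by rw [hBdef]; linarith [hpcdist u ⟨hu.1, huc⟩]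
    · push_neg at huc
      have heq : P u = QP (u - ℓc) := by rw [hPdef]; simp [not_le.2 huc]
      rw [heq]
      obtain ⟨hm, hn', hdd⟩ := hQprop (u - ℓc) ⟨by linarith, by linarith [hu.2]⟩
      exact ⟨hm, hn', le_trans (min_le_right _ _) hdd⟩
  have hL5R : L ≤ 5 * R := by rw [hLdef]; linarith [dist_nonneg (x := x) (y := (0 : Ed d))]
  have hmemIcc : ∀ s ∈ Icc (0:ℝ) 1, min (5*R*s) L ∈ Icc (0:ℝ) L := by
    intro s hs
    exact ⟨le_min (mul_nonneg (by linarith) hs.1) hL0, min_le_right _ _⟩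
  refine ⟨fun s => P (min (5*R*s) L), ?_, ?_, ?_, ?_, ?_⟩
  · rw [lipschitzOnWith_iff_dist_le_mul]
    intro s hs s' hs'
    have h1 := lipschitzOnWith_iff_dist_le_mul.1 hPlip _ (hmemIcc s hs) _ (hmemIcc s' hs')
    rw [NNReal.coe_one, one_mul] at h1
    have key : ∀ a b : ℝ, min a L - min b L ≤ |a - b| := by
      intro a b
      rcases le_total a L with hA | hA <;> rcases le_total b L with hB | hB
      · rw [min_eq_left hA, min_eq_left hB]; exact le_abs_self _
      · rw [min_eq_left hA, min_eq_right hB]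
        have h1' := le_abs_self (a - b); have h2' := abs_nonneg (a - b); linarith
      · rw [min_eq_right hA, min_eq_left hB]
        have h1' := le_abs_self (a - b); have h2' := abs_nonneg (a - b); linarith
      · rw [min_eq_right hA, min_eq_right hB]
        have := abs_nonneg (a - b); linarith
    have h2 : dist (min (5*R*s) L) (min (5*R*s') L) ≤ 5*R * dist s s' := by
      rw [Real.dist_eq, Real.dist_eq]
      have k1 := key (5*R*s) (5*R*s')
      have k2 := key (5*R*s') (5*R*s)
      rw [abs_sub_comm (5*R*s') (5*R*s)] at k2
      have habs : |min (5*R*s) L - min (5*R*s') L| ≤ |5*R*s - 5*R*s'| :=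
        abs_sub_le_iff.2 ⟨k1, k2⟩
      calc |min (5*R*s) L - min (5*R*s') L| ≤ |5*R*s - 5*R*s'| := habs
      _ = 5*R * |s - s'| := by
          rw [← mul_sub, abs_mul, abs_of_nonneg (by linarith : (0:ℝ) ≤ 5*R)]
    calc dist (P (min (5*R*s) L)) (P (min (5*R*s') L)) ≤ dist (min (5*R*s) L) (min (5*R*s') L) := h1
    _ ≤ 5*R * dist s s' := h2
    _ = (Real.toNNReal (5*R) : ℝ) * dist s s' := by
        rw [Real.coe_toNNReal _ (by linarith : (0:ℝ) ≤ 5*R)]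
  · show P (min (5*R*0) L) = x
    rw [mul_zero, min_eq_left hL0, hP0]
  · show P (min (5*R*1) L) = (R/2) • ν
    rw [mul_one, min_eq_right hL5R, hPend]
  · intro s hs
    obtain ⟨hm, hn', -⟩ := hPprop _ (hmemIcc s hs)
    exact ⟨hm, mem_ball.2 (by linarith)⟩
  · intro s hs
    show R * s / (4 * 24 * 48) < infDist (P (min (5*R*s) L)) (frontier Ω)
    have hRs : R * s ≤ R := by nlinarith [hs.2, hs.1]
    rcases le_or_gt (5*R*s) L with hA | hB
    · obtain ⟨-, -, hd⟩ := hPprop _ (hmemIcc s hs)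
      rw [min_eq_left hA] at hd ⊢
      have h1 : R * s / (4 * 24 * 48) < 5*R*s/4 + 2/3 * δ0 := by nlinarith [hs.1, hδ0]
      have h2 : R * s / (4 * 24 * 48) < R/60 := by nlinarith
      exact lt_of_lt_of_le (lt_min h1 h2) hd
    · rw [min_eq_right (le_of_lt hB), hPend]
      have h3 := aux_infDist_ge hΩo hne hν I1top z₀
      have h1 : 5*R/12 ≤ ⟪ν, z₀⟫ - ((0:ℝ) + γ * (4 * R)) := by rw [hz0h]; linarith
      have h2 : 5*R/12 ≤ 4 * R - dist z₀ 0 := by rw [hz0n]; linarith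
      have h4 := le_trans (le_min h1 h2) h3
      nlinarith
end
end
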